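/- Let 0 ≤ X ≤ Y be positive semidefinite matrices and F a projection commuting with X. Then for all p > 1, Tr(F X^p F) ≤ Tr(F Y^p F). -/

import Mathlib

/-! Because `F` commutes with `X`, the matrix `X * F = F * X * F` is positive semidefinite; if
`v` is one of its eigenvectors with eigenvalue `ν ≥ 0`, then `F v` is an eigenvector of `X` with the
same eigenvalue, so `⟨F v, f(X) F v⟩ = f ν ‖F v‖²`. Expanding `F v` in an eigenbasis of `Y` with
weights `a_i`, we get `ν ‖F v‖² = ⟨F v, X F v⟩ ≤ ⟨F v, Y F v⟩ = ∑ a_i λ_i`, and Jensen's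
inequality for the convex increasing `f = (· ^ p)` turns this into
`f ν ‖F v‖² ≤ ∑ a_i f(λ_i) = ⟨F v, f(Y) F v⟩`. Summing over an orthonormal eigenbasis of `X * F`
gives the trace inequality. -/

open Matrix ComplexOrder

/-- Apply a real function to a Hermitian matrix via the spectral decomposition. -/
noncomputable def hermFun {n : ℕ} {C : Matrix (Fin n) (Fin n) ℂ} (hC : C.IsHermitian)
    (f : ℝ → ℝ) : Matrix (Fin n) (Fin n) ℂ :=
  (hC.eigenvectorUnitary : Matrix (Fin n) (Fin n) ℂ) *
    Matrix.diagonal (fun i => (f (hC.eigenvalues i) : ℂ)) *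
    (star (hC.eigenvectorUnitary : Matrix (Fin n) (Fin n) ℂ))

theorem ConvexOn.map_mul_sum_le_sum_mul_of_monotoneOn {ι : Type*} {s : Set ℝ} {f : ℝ → ℝ}
    (hf : ConvexOn ℝ s f) (hmono : MonotoneOn f s) {t : Finset ι} {a x : ι → ℝ}
    (ha : ∀ i ∈ t, 0 ≤ a i) (hx : ∀ i ∈ t, x i ∈ s) {ν : ℝ} (hν : ν ∈ s)
    (hle : ν * ∑ i ∈ t, a i ≤ ∑ i ∈ t, a i * x i) :
    f ν * ∑ i ∈ t, a i ≤ ∑ i ∈ t, a i * f (x i) := by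
  rcases (Finset.sum_nonneg ha).eq_or_lt with hsum | hsum
  · have ha0 : ∀ i ∈ t, a i = 0 := (Finset.sum_eq_zero_iff_of_nonneg ha).mp hsum.symm
    rw [← hsum, mul_zero, Finset.sum_eq_zero fun i hi => by rw [ha0 i hi, zero_mul]]
  · have hmass : t.centerMass a x ∈ s := hf.1.centerMass_mem ha hsum hx
    have hνle : ν ≤ t.centerMass a x := by
      rw [Finset.centerMass, smul_eq_mul, inv_mul_eq_div, le_div_iff₀ hsum]
      simpa only [smul_eq_mul] using hle
    have := (hmono hν hmass hνle).trans (hf.map_centerMass_le ha hsum hx)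
    rw [Finset.centerMass, smul_eq_mul, inv_mul_eq_div, le_div_iff₀ hsum] at this
    simpa only [smul_eq_mul, Function.comp_apply] using this

theorem Matrix.trace_eq_sum_star_dotProduct_mulVec {𝕜 ι : Type*} [RCLike 𝕜] [Fintype ι]
    [DecidableEq ι] (M : Matrix ι ι 𝕜) (b : OrthonormalBasis ι 𝕜 (EuclideanSpace 𝕜 ι)) :
    M.trace = ∑ j, star ⇑(b j) ⬝ᵥ (M *ᵥ ⇑(b j)) := by
  have hM : M.trace = LinearMap.trace 𝕜 _ (toEuclideanLin M) := by
    rw [LinearMap.trace_eq_matrix_trace 𝕜 (PiLp.basisFun 2 𝕜 ι), toEuclideanLin, toLpLin_eq_toLin,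
      LinearMap.toMatrix_toLin]
  rw [hM, LinearMap.trace_eq_sum_inner _ b]
  simp [EuclideanSpace.inner_eq_star_dotProduct, dotProduct_comm]

namespace Matrix.IsHermitian

variable {n : ℕ} {C : Matrix (Fin n) (Fin n) ℂ} (hC : C.IsHermitian)

local notation "U" => (hC.eigenvectorUnitary : Matrix (Fin n) (Fin n) ℂ)

theorem hermFun_id : hermFun hC id = C := by
  conv_rhs => rw [hC.spectral_theorem, Unitary.conjStarAlgAut_apply]
  rfl

theorem hermFun_one : hermFun hC 1 = 1 := by
  simp [hermFun]

theorem re_star_dotProduct_hermFun_mulVec (f : ℝ → ℝ) (w : Fin n → ℂ) :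
    (star w ⬝ᵥ (hermFun hC f *ᵥ w)).re =
      ∑ i, Complex.normSq ((star U *ᵥ w) i) * f (hC.eigenvalues i) := by
  have hw : star w ᵥ* U = star (star U *ᵥ w) := by
    rw [star_mulVec, star_eq_conjTranspose, conjTranspose_conjTranspose]
  rw [hermFun, ← mulVec_mulVec, ← mulVec_mulVec, dotProduct_mulVec, hw]
  generalize star U *ᵥ w = c
  simp only [dotProduct, mulVec_diagonal, Pi.star_apply, Complex.re_sum]
  refine Finset.sum_congr rfl fun i _ => ?_
  simp only [Complex.mul_re, Complex.mul_im, Complex.star_def, Complex.conj_re, Complex.conj_im,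
    Complex.ofReal_re, Complex.ofReal_im, Complex.normSq_apply]
  ring

theorem hermFun_mulVec_of_mulVec_eq_smul (f : ℝ → ℝ) {w : Fin n → ℂ} {ν : ℝ}
    (hw : C *ᵥ w = ν • w) : hermFun hC f *ᵥ w = f ν • w := by
  have hU : U * star U = 1 := mem_unitaryGroup_iff.mp hC.eigenvectorUnitary.2
  have hdiag : star U * C = diagonal (RCLike.ofReal ∘ hC.eigenvalues) * star U := by
    rw [← hC.conjStarAlgAut_star_eigenvectorUnitary, Unitary.conjStarAlgAut_star_apply,
      Matrix.mul_assoc, hU, Matrix.mul_one]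
  set c := star U *ᵥ w
  have hc : ∀ i, hC.eigenvalues i ≠ ν → c i = 0 := fun i hi => by
    have := congrFun (congrArg (star U *ᵥ ·) hw) i
    rw [mulVec_mulVec, hdiag, ← mulVec_mulVec, mulVec_diagonal, mulVec_smul] at this
    have hne : ((hC.eigenvalues i : ℝ) : ℂ) ≠ ν := by exact_mod_cast hi
    simp only [Function.comp_apply, Pi.smul_apply, Complex.real_smul] at this
    exact (mul_eq_mul_right_iff.mp this).resolve_left hne
  have hfc : (diagonal fun i => (f (hC.eigenvalues i) : ℂ)) *ᵥ c = f ν • c := by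
    ext i
    by_cases hi : hC.eigenvalues i = ν
    · simp [mulVec_diagonal, hi]
    · simp [mulVec_diagonal, hc i hi]
  rw [hermFun, ← mulVec_mulVec, ← mulVec_mulVec, hfc, mulVec_smul, mulVec_mulVec, hU,
    one_mulVec]

theorem re_star_dotProduct_hermFun_mulVec_le {X Y : Matrix (Fin n) (Fin n) ℂ}
    (hX : X.IsHermitian) (hY : Y.IsHermitian) (hXY : (Y - X).PosSemidef) {s : Set ℝ}
    {f : ℝ → ℝ} (hf : ConvexOn ℝ s f) (hmono : MonotoneOn f s) (hYs : ∀ i, hY.eigenvalues i ∈ s)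
    {w : Fin n → ℂ} {ν : ℝ} (hν : ν ∈ s) (hw : X *ᵥ w = ν • w) :
    (star w ⬝ᵥ (hermFun hX f *ᵥ w)).re ≤ (star w ⬝ᵥ (hermFun hY f *ᵥ w)).re := by
  have hnorm := hY.re_star_dotProduct_hermFun_mulVec 1 w
  have hYw := hY.re_star_dotProduct_hermFun_mulVec id w
  simp only [hY.hermFun_one, hY.hermFun_id, one_mulVec, Pi.one_apply, mul_one, id] at hnorm hYw
  have hXw : (star w ⬝ᵥ (X *ᵥ w)).re = ν * (star w ⬝ᵥ w).re := by
    rw [hw, dotProduct_smul, Complex.real_smul, Complex.re_ofReal_mul]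
  have hle : ν * (star w ⬝ᵥ w).re ≤ (star w ⬝ᵥ (Y *ᵥ w)).re := by
    have := (Complex.le_def.mp (hXY.dotProduct_mulVec_nonneg w)).1
    rw [sub_mulVec, dotProduct_sub, Complex.sub_re, hXw] at this
    simpa using this
  rw [hX.hermFun_mulVec_of_mulVec_eq_smul f hw, dotProduct_smul, Complex.real_smul,
    Complex.re_ofReal_mul, hnorm, hY.re_star_dotProduct_hermFun_mulVec]
  rw [hnorm, hYw] at hle
  exact hf.map_mul_sum_le_sum_mul_of_monotoneOn hmono (fun i _ => Complex.normSq_nonneg _)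
    (fun i _ => hYs i) hν hle

end Matrix.IsHermitian

section Projection

variable {𝕜 ι : Type*} [RCLike 𝕜] [Fintype ι] {X F : Matrix ι ι 𝕜}

theorem Matrix.IsHermitian.trace_mul_mul_self_eq_sum [DecidableEq ι] (hF : F.IsHermitian)
    (M : Matrix ι ι 𝕜) (b : OrthonormalBasis ι 𝕜 (EuclideanSpace 𝕜 ι)) :
    (F * M * F).trace = ∑ j, star (F *ᵥ ⇑(b j)) ⬝ᵥ (M *ᵥ (F *ᵥ ⇑(b j))) := by
  rw [trace_eq_sum_star_dotProduct_mulVec]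
  refine Finset.sum_congr rfl fun j _ => ?_
  rw [← mulVec_mulVec, ← mulVec_mulVec, dotProduct_mulVec, star_mulVec, hF.eq]

theorem Matrix.PosSemidef.mul_of_idempotent_of_commute (hX : X.PosSemidef) (hFproj : F * F = F)
    (hF : F.IsHermitian) (hFX : F * X = X * F) : (X * F).PosSemidef := by
  have h := hX.mul_mul_conjTranspose_same F
  rwa [hF.eq, hFX, Matrix.mul_assoc, hFproj] at h

theorem Matrix.mulVec_mulVec_eq_smul_of_commute (hFproj : F * F = F) (hFX : F * X = X * F)
    {v : ι → 𝕜} {ν : ℝ} (hv : (X * F) *ᵥ v = ν • v) : X *ᵥ (F *ᵥ v) = ν • (F *ᵥ v) := by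
  have hFXF : F * (X * F) = X * F := by rw [← Matrix.mul_assoc, hFX, Matrix.mul_assoc, hFproj]
  calc X *ᵥ (F *ᵥ v) = F *ᵥ ((X * F) *ᵥ v) := by rw [mulVec_mulVec, mulVec_mulVec, hFXF]
    _ = ν • (F *ᵥ v) := by rw [hv, mulVec_smul]

end Projection

theorem trace_proj_hermFun_mono {n : ℕ} {X Y F : Matrix (Fin n) (Fin n) ℂ}
    (hX : X.PosSemidef) (hY : Y.PosSemidef) (hXY : (Y - X).PosSemidef)
    (hFproj : F * F = F) (hFherm : F.IsHermitian) (hFX : F * X = X * F) {f : ℝ → ℝ}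
    (hf : ConvexOn ℝ (Set.Ici 0) f) (hmono : MonotoneOn f (Set.Ici 0)) :
    (F * hermFun hX.1 f * F).trace.re ≤ (F * hermFun hY.1 f * F).trace.re := by
  have hZ := hX.mul_of_idempotent_of_commute hFproj hFherm hFX
  rw [hFherm.trace_mul_mul_self_eq_sum _ hZ.1.eigenvectorBasis,
    hFherm.trace_mul_mul_self_eq_sum _ hZ.1.eigenvectorBasis, Complex.re_sum, Complex.re_sum]
  exact Finset.sum_le_sum fun j _ =>
    hX.1.re_star_dotProduct_hermFun_mulVec_le hY.1 hXY hf hmono hY.eigenvalues_nonneg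
      (hZ.eigenvalues_nonneg j)
      (mulVec_mulVec_eq_smul_of_commute hFproj hFX (hZ.1.mulVec_eigenvectorBasis j))

theorem trace_proj_pow_mono {n : ℕ} (X Y F : Matrix (Fin n) (Fin n) ℂ)
    (hX : X.PosSemidef) (hY : Y.PosSemidef) (hXY : (Y - X).PosSemidef)
    (hFproj : F * F = F) (hFherm : F.IsHermitian) (hFX : F * X = X * F)
    (p : ℝ) (hp : 1 < p) :
    (Matrix.trace (F * hermFun hX.1 (fun t => t ^ p) * F)).re ≤
      (Matrix.trace (F * hermFun hY.1 (fun t => t ^ p) * F)).re :=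
  trace_proj_hermFun_mono hX hY hXY hFproj hFherm hFX (convexOn_rpow hp.le)
    (Real.monotoneOn_rpow_Ici_of_exponent_nonneg (zero_le_one.trans hp.le))
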